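/- Let D be a G-graded complex graded division algebra with D_e = ℂ = Z(D) (so D is a twisted group algebra of its finite support T with nondegenerate commutation bicharacter β). Then: (1) every ℂ-linear automorphism ψ_0 of D as a graded algebra has the form ψ_0(X_t) = X_t ν(t) for some ν ∈ Hom(T, ℂ^×); (2) a ℂ-antilinear graded automorphism exists only if β takes values in {±1}, and then any such automorphism has the form ψ_0(X_t) = X_t ν(t) with ν(st) = ν(s)ν(t)β(s,t) for all s,t ∈ T; (3) in either case, ψ_0 commutes with the involution φ_0 (with φ_0(X_t) = X_t, φ_0|_{D_e} = conjugation) if and only if ν takes values in ℝ^×. -/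

import Mathlib

variable {G : Type*} [CommGroup G] [DecidableEq G]
variable {D : Type*} [Ring D] [Algebra ℂ D] [Algebra ℝ D] [IsScalarTower ℝ ℂ D]

/-- A real graded division algebra. -/
def IsGDA (comp : G → Submodule ℝ D) : Prop :=
  DirectSum.IsInternal comp ∧ (1 : D) ∈ comp 1 ∧
    (∀ (g h : G) (a b : D), a ∈ comp g → b ∈ comp h → a * b ∈ comp (g * h)) ∧
    ∀ (g : G) (a : D), a ∈ comp g → a ≠ 0 → IsUnit a

/-!
Every homogeneous component `comp t` is the line `X t · ℂ`, since multiplying it by a homogeneous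
unit of degree `t⁻¹` lands in `D_e = ℂ`. Hence a graded automorphism `ψ` rescales each `X t` by
some `ν t ∈ ℂˣ`, and comparing `ψ (X s X t)` with `ψ (X s) ψ (X t)` through the structure constant
`X s X t = X (st) σ` gives `ν (st) f(σ) = σ ν(s) ν(t)`, where `f` is the action of `ψ` on `ℂ`.
For `f = id` this says that `ν` is a character. For `f` the conjugation, applying `φ` to
`X s X t = X (st) σ` gives `X t X s = X (st) σ̄`, so `σ = β(s,t) σ̄` and
`ν (st) = ν(s) ν(t) β(s,t)`; this forces `β` to be symmetric, and together with
`β(s,t) β(t,s) = 1` that means `β = ±1`.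
Finally `ψ φ` and `φ ψ` agree on `X t · c` exactly when `ν t` is real, and the components span `D`.
-/

section UnitsAndScalars

variable {K A : Type*} [Field K] [Ring A] [Algebra K A]

theorem mul_algebraMap_mul_mul_algebraMap (x y : A) (a b : K) :
    x * algebraMap K A a * (y * algebraMap K A b) = x * y * algebraMap K A (a * b) := by
  rw [← mul_assoc, Algebra.right_comm, map_mul, mul_assoc]

theorem eq_mul_algebraMap_of_mul_eq_algebraMap {u v : Aˣ} {y : A} {a b : K}
    (hu : (v : A) * u = algebraMap K A b) (hy : (v : A) * y = algebraMap K A a) :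
    y = u * algebraMap K A (b⁻¹ * a) := by
  nontriviality A
  have hb : b ≠ 0 := by
    rintro rfl
    exact (v * u).ne_zero (by rw [Units.val_mul, hu, map_zero])
  rw [← Units.inv_mul_cancel_left v y, hy, ← Units.inv_mul_cancel_left v u, hu, mul_assoc,
    ← map_mul, mul_inv_cancel_left₀ hb]

theorem exists_eq_mul_algebraMap_of_mem {Γ R : Type*} [Group Γ] [Semiring R] [Module R A]
    {comp : Γ → Submodule R A}
    (hmul : ∀ (g h : Γ) (a b : A), a ∈ comp g → b ∈ comp h → a * b ∈ comp (g * h))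
    (hscalar : ∀ z ∈ comp 1, ∃ c : K, z = algebraMap K A c)
    {g : Γ} {u v : Aˣ} (hu : (u : A) ∈ comp g) (hv : (v : A) ∈ comp g⁻¹) {y : A}
    (hy : y ∈ comp g) : ∃ c : K, y = u * algebraMap K A c := by
  obtain ⟨b, hb⟩ := hscalar _ (by simpa using hmul _ _ _ _ hv hu)
  obtain ⟨a, ha⟩ := hscalar _ (by simpa using hmul _ _ _ _ hv hy)
  exact ⟨_, eq_mul_algebraMap_of_mul_eq_algebraMap hb ha⟩

theorem map_mul_algebraMap_of_map_eq {F : Type*} [FunLike F A A] [MulHomClass F A A] {ψ : F}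
    {f : K → K} (hf : ∀ c, ψ (algebraMap K A c) = algebraMap K A (f c)) {x : A} {a : K}
    (hx : ψ x = x * algebraMap K A a) (c : K) :
    ψ (x * algebraMap K A c) = x * algebraMap K A (a * f c) := by
  rw [map_mul, hx, hf, mul_assoc, ← map_mul]

theorem antimap_mul_algebraMap_of_antimap_eq {φ : A → A}
    (hanti : ∀ x y, φ (x * y) = φ y * φ x) {f : K → K}
    (hf : ∀ c, φ (algebraMap K A c) = algebraMap K A (f c)) {x : A} (hx : φ x = x) (c : K) :
    φ (x * algebraMap K A c) = x * algebraMap K A (f c) := by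
  rw [hanti, hf, hx, Algebra.commutes]

variable [Nontrivial A]

theorem ne_zero_of_mul_eq_mul_algebraMap {u v w : Aˣ} {σ : K}
    (h : (u : A) * v = w * algebraMap K A σ) : σ ≠ 0 := by
  rintro rfl
  exact (u * v).ne_zero (by rw [Units.val_mul, h, map_zero, mul_zero])

theorem exists_units_map_eq_mul_algebraMap {ι F : Type*} [FunLike F A A] [MonoidHomClass F A A]
    (ψ : F) {X : ι → Aˣ} (h : ∀ i, ∃ c : K, ψ (X i) = X i * algebraMap K A c) :
    ∃ ν : ι → Kˣ, ∀ i, ψ (X i) = X i * algebraMap K A (ν i) := by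
  choose c hc using h
  refine ⟨fun i => Units.mk0 (c i) fun h0 => ?_, hc⟩
  have := (X i).isUnit.map ψ
  rw [hc, h0, map_zero, mul_zero] at this
  exact not_isUnit_zero this

theorem scale_mul_map_structureConst {F : Type*} [FunLike F A A] [MulHomClass F A A] {ψ : F}
    {f : K → K} (hf : ∀ c, ψ (algebraMap K A c) = algebraMap K A (f c)) {u v w : Aˣ}
    {a b c σ : K} (hu : ψ u = u * algebraMap K A a) (hv : ψ v = v * algebraMap K A b)
    (hw : ψ w = w * algebraMap K A c) (huv : (u : A) * v = w * algebraMap K A σ) :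
    c * f σ = σ * (a * b) := by
  apply (algebraMap K A).injective
  apply w.isUnit.mul_left_cancel
  calc (w : A) * algebraMap K A (c * f σ) = ψ (w * algebraMap K A σ) :=
        (map_mul_algebraMap_of_map_eq hf hw σ).symm
    _ = u * algebraMap K A a * (v * algebraMap K A b) := by rw [← huv, map_mul, hu, hv]
    _ = w * algebraMap K A (σ * (a * b)) := by
        rw [mul_algebraMap_mul_mul_algebraMap, huv, mul_assoc, ← map_mul]

theorem antimap_structureConst_eq {φ : A → A} (hanti : ∀ x y, φ (x * y) = φ y * φ x)
    {f : K → K} (hf : ∀ c, φ (algebraMap K A c) = algebraMap K A (f c)) {u v w : Aˣ}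
    (hu : φ u = u) (hv : φ v = v) (hw : φ w = w) {σ τ : K}
    (huv : (u : A) * v = w * algebraMap K A σ) (hvu : (v : A) * u = w * algebraMap K A τ) :
    τ = f σ := by
  apply (algebraMap K A).injective
  apply w.isUnit.mul_left_cancel
  rw [← hvu, ← antimap_mul_algebraMap_of_antimap_eq hanti hf hw, ← huv, hanti, hu, hv]

theorem mul_eq_one_of_commutation {u v : Aˣ} {b b' : K}
    (h : (u : A) * v = algebraMap K A b * (v * u))
    (h' : (v : A) * u = algebraMap K A b' * (u * v)) : b * b' = 1 := by
  apply (algebraMap K A).injective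
  apply (u * v).isUnit.mul_right_cancel
  rw [Units.val_mul, map_mul, map_one, one_mul, mul_assoc, ← h', ← h]

theorem structureConst_eq_mul_of_commutation {u v w : Aˣ} {σ τ β : K}
    (huv : (u : A) * v = w * algebraMap K A σ) (hvu : (v : A) * u = w * algebraMap K A τ)
    (h : (u : A) * v = algebraMap K A β * (v * u)) : σ = τ * β := by
  apply (algebraMap K A).injective
  apply w.isUnit.mul_left_cancel
  rw [← huv, h, hvu, ← Algebra.left_comm, ← map_mul, mul_comm β]

end UnitsAndScalars

section TwistedGroupAlgebra

variable {K A T : Type*} [Field K] [Ring A] [Algebra K A] [Nontrivial A] {X : T → Aˣ}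
  {F : Type*} [FunLike F A A] [MulHomClass F A A] {ψ : F}

theorem scale_mul_of_map_algebraMap_eq_self [Mul T]
    (hXX : ∀ s t, ∃ σ : K, (X s : A) * X t = X (s * t) * algebraMap K A σ)
    (hψ : ∀ c, ψ (algebraMap K A c) = algebraMap K A c) {ν : T → Kˣ}
    (hν : ∀ t, ψ (X t) = X t * algebraMap K A (ν t)) (s t : T) :
    ν (s * t) = ν s * ν t := by
  obtain ⟨σ, hσ⟩ := hXX s t
  have key := scale_mul_map_structureConst (f := id) hψ (hν s) (hν t) (hν (s * t)) hσ
  rw [id, mul_comm σ] at key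
  exact Units.ext (mul_right_cancel₀ (ne_zero_of_mul_eq_mul_algebraMap hσ) key)

theorem scale_mul_of_map_algebraMap_eq_conj [StarRing K] [CommMagma T]
    (hXX : ∀ s t, ∃ σ : K, (X s : A) * X t = X (s * t) * algebraMap K A σ)
    {β : T → T → K} (hβ : ∀ s t, (X s : A) * X t = algebraMap K A (β s t) * (X t * X s))
    {φ : A → A} (hanti : ∀ x y, φ (x * y) = φ y * φ x)
    (hφC : ∀ c, φ (algebraMap K A c) = algebraMap K A (starRingEnd K c))
    (hφX : ∀ t, φ (X t) = X t)
    (hψ : ∀ c, ψ (algebraMap K A c) = algebraMap K A (starRingEnd K c)) {ν : T → Kˣ}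
    (hν : ∀ t, ψ (X t) = X t * algebraMap K A (ν t)) (s t : T) :
    (ν (s * t) : K) = ν s * ν t * β s t := by
  obtain ⟨σ, hσ⟩ := hXX s t
  obtain ⟨τ, hτ⟩ := hXX t s
  rw [mul_comm t s] at hτ
  have hτσ := antimap_structureConst_eq hanti hφC (hφX s) (hφX t) (hφX (s * t)) hσ hτ
  have hστ := structureConst_eq_mul_of_commutation hσ hτ (hβ s t)
  have key := scale_mul_map_structureConst hψ (hν s) (hν t) (hν (s * t)) hσ
  rw [← hτσ, hστ] at key
  exact mul_right_cancel₀ (ne_zero_of_mul_eq_mul_algebraMap hτ) (by linear_combination key)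

theorem eq_one_or_neg_one_of_scale_mul [CommMagma T] {β : T → T → K}
    (hβ : ∀ s t, (X s : A) * X t = algebraMap K A (β s t) * (X t * X s)) {ν : T → Kˣ}
    (hνβ : ∀ s t, (ν (s * t) : K) = ν s * ν t * β s t) (s t : T) :
    β s t = 1 ∨ β s t = -1 := by
  have hsymm : β s t = β t s := by
    have h := hνβ t s
    rw [mul_comm t s, hνβ s t, mul_comm (ν t : K)] at h
    exact mul_left_cancel₀ (mul_ne_zero (ν s).ne_zero (ν t).ne_zero) h
  have h := mul_eq_one_of_commutation (hβ s t) (hβ t s)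
  rw [← hsymm] at h
  exact mul_self_eq_one_iff.mp h

end TwistedGroupAlgebra

theorem AddMonoidHom.ext_of_iSup_eq_top {R M N ι : Type*} [Semiring R] [AddCommMonoid M]
    [AddCommMonoid N] [Module R M] {p : ι → Submodule R M} (hp : ⨆ i, p i = ⊤)
    {f g : M →+ N} (h : ∀ i, ∀ x ∈ p i, f x = g x) : f = g :=
  ext fun x => Submodule.iSup_induction p (motive := fun x => f x = g x) (hp ▸ Submodule.mem_top)
    h (by simp only [map_zero]) fun y z hy hz => by simp only [map_add, hy, hz]

theorem commute_iff_im_eq_zero {Γ A : Type*} [Group Γ] [Ring A] [Algebra ℂ A] [Algebra ℝ A]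
    [Nontrivial A] {comp : Γ → Submodule ℝ A} (hspan : ⨆ g, comp g = ⊤) {T : Subgroup Γ}
    (hT : ∀ g, comp g ≠ ⊥ → g ∈ T) {X : T → Aˣ}
    (hcoord : ∀ t : T, ∀ y ∈ comp t, ∃ c : ℂ, y = X t * algebraMap ℂ A c)
    {φ : A ≃ₗ[ℝ] A} (hanti : ∀ x y, φ (x * y) = φ y * φ x)
    (hφC : ∀ c, φ (algebraMap ℂ A c) = algebraMap ℂ A (starRingEnd ℂ c))
    (hφX : ∀ t, φ (X t) = X t) {ψ : A ≃ₐ[ℝ] A} {f : ℂ →+* ℂ}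
    (hf : ∀ c, f (starRingEnd ℂ c) = starRingEnd ℂ (f c))
    (hψC : ∀ c, ψ (algebraMap ℂ A c) = algebraMap ℂ A (f c)) {ν : T → ℂ}
    (hν : ∀ t, ψ (X t) = X t * algebraMap ℂ A (ν t)) :
    (∀ x, ψ (φ x) = φ (ψ x)) ↔ ∀ t, (ν t).im = 0 := by
  simp_rw [← Complex.conj_eq_iff_im]
  constructor
  · intro h t
    apply (algebraMap ℂ A).injective
    apply (X t).isUnit.mul_left_cancel
    calc (X t : A) * algebraMap ℂ A (starRingEnd ℂ (ν t)) = φ (ψ (X t)) := by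
          rw [hν, antimap_mul_algebraMap_of_antimap_eq hanti hφC (hφX t)]
      _ = X t * algebraMap ℂ A (ν t) := by rw [← h, hφX, hν]
  · intro hreal x
    suffices (ψ : A →+ A).comp (φ : A →+ A) = (φ : A →+ A).comp (ψ : A →+ A) from
      DFunLike.congr_fun this x
    refine AddMonoidHom.ext_of_iSup_eq_top hspan fun g y hy => ?_
    by_cases hg : g ∈ T
    · obtain ⟨c, rfl⟩ := hcoord ⟨g, hg⟩ y hy
      simp only [AddMonoidHom.coe_comp, AddMonoidHom.coe_coe, Function.comp_apply]
      rw [antimap_mul_algebraMap_of_antimap_eq hanti hφC (hφX _),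
        map_mul_algebraMap_of_map_eq hψC (hν _), map_mul_algebraMap_of_map_eq hψC (hν _),
        antimap_mul_algebraMap_of_antimap_eq hanti hφC (hφX _), map_mul (starRingEnd ℂ), hreal, hf]
    · rw [not_imp_comm.mp (hT g) hg, Submodule.mem_bot] at hy
      simp [hy]

theorem stmt_10_general (comp : G → Submodule ℝ D) (hgda : IsGDA comp)
    (T : Subgroup G) (hT : ∀ g : G, comp g ≠ ⊥ ↔ g ∈ T)
    (X : ↥T → Dˣ) (hX : ∀ t : ↥T, (X t : D) ∈ comp (t : G))
    -- `D_e = ℂ·1 = Z(D)`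
    (hDe : ∀ z ∈ comp (1 : G), ∃ c : ℂ, z = algebraMap ℂ D c)
    (β : ↥T → ↥T → ℂ)
    (hβdef : ∀ s t : ↥T,
      (X s : D) * (X t : D) = algebraMap ℂ D (β s t) * ((X t : D) * (X s : D)))
    (φ : D ≃ₗ[ℝ] D)
    (hanti : ∀ x y : D, φ (x * y) = φ y * φ x)
    (hφX : ∀ t : ↥T, φ (X t : D) = (X t : D))
    (hφC : ∀ c : ℂ, φ (algebraMap ℂ D c) = algebraMap ℂ D ((starRingEnd ℂ) c)) :
    -- (1) ℂ-linear graded automorphisms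
    (∀ ψ : D ≃ₐ[ℝ] D, (∀ (g : G), ∀ x ∈ comp g, ψ x ∈ comp g) →
      (∀ c : ℂ, ψ (algebraMap ℂ D c) = algebraMap ℂ D c) →
      ∃ ν : ↥T → ℂˣ, (∀ s t : ↥T, ν (s * t) = ν s * ν t) ∧
        ∀ t : ↥T, ψ (X t : D) = (X t : D) * algebraMap ℂ D (ν t)) ∧
    -- (2) ℂ-antilinear graded automorphisms
    (∀ ψ : D ≃ₐ[ℝ] D, (∀ (g : G), ∀ x ∈ comp g, ψ x ∈ comp g) →
      (∀ c : ℂ, ψ (algebraMap ℂ D c) = algebraMap ℂ D ((starRingEnd ℂ) c)) →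
      (∀ s t : ↥T, β s t = 1 ∨ β s t = -1) ∧
        ∃ ν : ↥T → ℂˣ, (∀ s t : ↥T, (ν (s * t) : ℂ) = (ν s : ℂ) * (ν t : ℂ) * β s t) ∧
          ∀ t : ↥T, ψ (X t : D) = (X t : D) * algebraMap ℂ D (ν t)) ∧
    -- (3) commuting with the involution
    ∀ (ψ : D ≃ₐ[ℝ] D) (ν : ↥T → ℂˣ), (∀ (g : G), ∀ x ∈ comp g, ψ x ∈ comp g) →
      ((∀ c : ℂ, ψ (algebraMap ℂ D c) = algebraMap ℂ D c) ∨
        (∀ c : ℂ, ψ (algebraMap ℂ D c) = algebraMap ℂ D ((starRingEnd ℂ) c))) →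
      (∀ t : ↥T, ψ (X t : D) = (X t : D) * algebraMap ℂ D (ν t)) →
      ((∀ x : D, ψ (φ x) = φ (ψ x)) ↔ ∀ t : ↥T, ((ν t : ℂ)).im = 0) := by
  obtain ⟨hint, -, hmul, -⟩ := hgda
  have : Nontrivial D := by
    obtain ⟨x, -, hx⟩ := (Submodule.ne_bot_iff _).mp ((hT 1).mpr T.one_mem)
    exact ⟨⟨x, 0, hx⟩⟩
  have hcoord : ∀ t : ↥T, ∀ y ∈ comp t, ∃ c : ℂ, y = X t * algebraMap ℂ D c := fun t _ hy =>
    exists_eq_mul_algebraMap_of_mem hmul hDe (hX t) (by simpa using hX t⁻¹) hy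
  have hXX : ∀ s t : ↥T, ∃ σ : ℂ, (X s : D) * X t = X (s * t) * algebraMap ℂ D σ :=
    fun s t => hcoord _ _ (by simpa using hmul _ _ _ _ (hX s) (hX t))
  have hscale (ψ : D ≃ₐ[ℝ] D) (hψ : ∀ g, ∀ x ∈ comp g, ψ x ∈ comp g) :
      ∃ ν : ↥T → ℂˣ, ∀ t, ψ (X t) = X t * algebraMap ℂ D (ν t) :=
    exists_units_map_eq_mul_algebraMap ψ fun t => hcoord t _ (hψ _ _ (hX t))
  refine ⟨fun ψ hψ hψC => ?_, fun ψ hψ hψC => ?_, fun ψ ν _ hψC hν => ?_⟩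
  · obtain ⟨ν, hν⟩ := hscale ψ hψ
    exact ⟨ν, scale_mul_of_map_algebraMap_eq_self hXX hψC hν, hν⟩
  · obtain ⟨ν, hν⟩ := hscale ψ hψ
    have hνβ := scale_mul_of_map_algebraMap_eq_conj hXX hβdef hanti hφC hφX hψC hν
    exact ⟨eq_one_or_neg_one_of_scale_mul hβdef hνβ, ν, hνβ, hν⟩
  · obtain ⟨f, hf, hψf⟩ : ∃ f : ℂ →+* ℂ, (∀ c, f (starRingEnd ℂ c) = starRingEnd ℂ (f c)) ∧
        ∀ c, ψ (algebraMap ℂ D c) = algebraMap ℂ D (f c) := by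
      rcases hψC with h | h
      exacts [⟨RingHom.id ℂ, fun _ => rfl, h⟩, ⟨starRingEnd ℂ, fun _ => rfl, h⟩]
    exact commute_iff_im_eq_zero hint.submodule_iSup_eq_top (fun g => (hT g).mp) hcoord hanti
      hφC hφX hf hψf hν

/-- For a graded division algebra over `ℂ` with `D_e = ℂ = Z(D)` (a twisted group
algebra `D = ⊕_{t∈T} ℂ X_t` with nondegenerate commutation bicharacter `β`):
(1) the `ℂ`-linear graded automorphisms are given by characters `ν ∈ Hom(T, ℂˣ)`
via `ψ₀(X_t) = X_t ν(t)`;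
(2) `ℂ`-antilinear graded automorphisms exist only if `β` takes values `±1`, and
are given by `ψ₀(X_t) = X_t ν(t)` with `ν(st) = ν(s)ν(t)β(s,t)`;
(3) in either case `ψ₀` commutes with the involution `φ₀` (fixing every `X_t` and
conjugating `D_e`) if and only if `ν` takes real values. -/
theorem stmt_10 (comp : G → Submodule ℝ D) (hgda : IsGDA comp)
    (T : Subgroup G) [Finite ↥T] (hT : ∀ g : G, comp g ≠ ⊥ ↔ g ∈ T)
    (X : ↥T → Dˣ) (hX : ∀ t : ↥T, (X t : D) ∈ comp (t : G))
    -- `D_e = ℂ·1 = Z(D)`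
    (hDe : ∀ z ∈ comp (1 : G), ∃ c : ℂ, z = algebraMap ℂ D c)
    (hDe' : ∀ c : ℂ, algebraMap ℂ D c ∈ comp (1 : G))
    (β : ↥T → ↥T → ℂ)
    (hβdef : ∀ s t : ↥T,
      (X s : D) * (X t : D) = algebraMap ℂ D (β s t) * ((X t : D) * (X s : D)))
    (hβmul₁ : ∀ s t u : ↥T, β (s * t) u = β s u * β t u)
    (hβmul₂ : ∀ s t u : ↥T, β s (t * u) = β s t * β s u)
    (hβalt : ∀ t : ↥T, β t t = 1)
    (hβnd : ∀ s : ↥T, (∀ t : ↥T, β s t = 1) → s = 1)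
    (φ : D ≃ₗ[ℝ] D)
    (hanti : ∀ x y : D, φ (x * y) = φ y * φ x)
    (hinvol : ∀ x : D, φ (φ x) = x)
    (hgrφ : ∀ (g : G), ∀ x ∈ comp g, φ x ∈ comp g)
    (hφX : ∀ t : ↥T, φ (X t : D) = (X t : D))
    (hφC : ∀ c : ℂ, φ (algebraMap ℂ D c) = algebraMap ℂ D ((starRingEnd ℂ) c)) :
    -- (1) ℂ-linear graded automorphisms
    (∀ ψ : D ≃ₐ[ℝ] D, (∀ (g : G), ∀ x ∈ comp g, ψ x ∈ comp g) →
      (∀ c : ℂ, ψ (algebraMap ℂ D c) = algebraMap ℂ D c) →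
      ∃ ν : ↥T → ℂˣ, (∀ s t : ↥T, ν (s * t) = ν s * ν t) ∧
        ∀ t : ↥T, ψ (X t : D) = (X t : D) * algebraMap ℂ D (ν t)) ∧
    -- (2) ℂ-antilinear graded automorphisms
    (∀ ψ : D ≃ₐ[ℝ] D, (∀ (g : G), ∀ x ∈ comp g, ψ x ∈ comp g) →
      (∀ c : ℂ, ψ (algebraMap ℂ D c) = algebraMap ℂ D ((starRingEnd ℂ) c)) →
      (∀ s t : ↥T, β s t = 1 ∨ β s t = -1) ∧
        ∃ ν : ↥T → ℂˣ, (∀ s t : ↥T, (ν (s * t) : ℂ) = (ν s : ℂ) * (ν t : ℂ) * β s t) ∧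
          ∀ t : ↥T, ψ (X t : D) = (X t : D) * algebraMap ℂ D (ν t)) ∧
    -- (3) commuting with the involution
    ∀ (ψ : D ≃ₐ[ℝ] D) (ν : ↥T → ℂˣ), (∀ (g : G), ∀ x ∈ comp g, ψ x ∈ comp g) →
      ((∀ c : ℂ, ψ (algebraMap ℂ D c) = algebraMap ℂ D c) ∨
        (∀ c : ℂ, ψ (algebraMap ℂ D c) = algebraMap ℂ D ((starRingEnd ℂ) c))) →
      (∀ t : ↥T, ψ (X t : D) = (X t : D) * algebraMap ℂ D (ν t)) →
      ((∀ x : D, ψ (φ x) = φ (ψ x)) ↔ ∀ t : ↥T, ((ν t : ℂ)).im = 0) :=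
  stmt_10_general comp hgda T hT X hX hDe β hβdef φ hanti hφX hφC
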